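/- Let n ≥ 2 be an integer. Let (R_1,Z_1),…,(R_n,Z_n) be i.i.d. copies of a pair (R,Z) of square-integrable real random variables satisfying Cov(R_k, Z_j) = 0 for all j,k and Cov(R_k R_{k'}, Z_j Z_{j'}) = 0 for all j,j',k,k'. Write σ_Z² = Var(Z). Define the RLOO estimator G = (1/n) Σ_{j=1}^n (R_j − (1/(n−1)) Σ_{k≠j} R_k) Z_j. Then Var(G) = (σ_Z²/(n−1)) Var(R). -/

import Mathlib

/-!
Write the estimator as `G = ∑_{j,k} w_{jk} R_k Z_j` with
`w_{jk} = (δ_{jk} - (1 - δ_{jk}) / (n - 1)) / n`, a symmetric matrix whose rows sum to zero, so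
`Var G = ∑ w_{jk} w_{j'k'} Cov(R_k Z_j, R_{k'} Z_{j'})`. The uncorrelation hypotheses factor
`E[R_k R_{k'} Z_j Z_{j'}] = E[R_k R_{k'}] E[Z_j Z_{j'}]`, and independence gives
`Cov(R_k, R_{k'}) = δ_{kk'} Var R` and `Cov(Z_j, Z_{j'}) = δ_{jj'} Var Z`. After expanding, all
terms but `δ_{kk'} δ_{jj'} Var R Var Z` are killed by the zero row and column sums, which leaves
`Var R Var Z ∑ w_{jk}² = Var R Var Z / (n - 1)`.
-/

open MeasureTheory ProbabilityTheory Finset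

noncomputable def covar {Ω : Type*} [MeasurableSpace Ω] (μ : Measure Ω) (X Y : Ω → ℝ) : ℝ :=
  (∫ ω, X ω * Y ω ∂μ) - (∫ ω, X ω ∂μ) * (∫ ω, Y ω ∂μ)

theorem Fintype.sum_ite_eq_add_card_sub_one_mul {α : Type*} [Fintype α] [DecidableEq α] (j : α)
    (x y : ℝ) : ∑ k, (if k = j then x else y) = x + ((Fintype.card α : ℝ) - 1) * y := by
  rw [← add_sum_erase _ _ (mem_univ j), if_pos rfl,
    Finset.sum_congr rfl fun k hk => if_neg (ne_of_mem_erase hk), Finset.sum_const,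
    card_erase_of_mem (mem_univ j), Finset.card_univ, nsmul_eq_mul,
    Nat.cast_pred (Fintype.card_pos_iff.2 ⟨j⟩)]

noncomputable def rlooWeight (n : ℕ) (j k : Fin n) : ℝ :=
  (if k = j then 1 else -(1 / ((n : ℝ) - 1))) / n

theorem rlooWeight_comm (n : ℕ) (j k : Fin n) : rlooWeight n j k = rlooWeight n k j := by
  simp only [rlooWeight, eq_comm]

theorem sum_rlooWeight {n : ℕ} (hn : 2 ≤ n) (j : Fin n) : ∑ k, rlooWeight n j k = 0 := by
  have : (n : ℝ) - 1 ≠ 0 := by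
    have : (2 : ℝ) ≤ n := by exact_mod_cast hn
    linarith
  simp only [rlooWeight, ← sum_div, Fintype.sum_ite_eq_add_card_sub_one_mul, Fintype.card_fin]
  field_simp
  ring

theorem sum_rlooWeight_sq {n : ℕ} (hn : 2 ≤ n) :
    ∑ p : Fin n × Fin n, rlooWeight n p.1 p.2 ^ 2 = 1 / ((n : ℝ) - 1) := by
  have : (2 : ℝ) ≤ n := by exact_mod_cast hn
  have : (n : ℝ) - 1 ≠ 0 := by linarith
  have : (n : ℝ) ≠ 0 := by linarith
  simp only [rlooWeight, div_pow, apply_ite (· ^ 2), ← sum_div, Fintype.sum_prod_type,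
    Fintype.sum_ite_eq_add_card_sub_one_mul, Fintype.card_fin, sum_const, card_univ, nsmul_eq_mul]
  field_simp
  ring

theorem sum_rlooWeight_mul (n : ℕ) (j : Fin n) (x : Fin n → ℝ) :
    ∑ k, rlooWeight n j k * x k
      = 1 / n * (x j - 1 / ((n : ℝ) - 1) * ∑ k ∈ univ.erase j, x k) := by
  rw [← add_sum_erase _ _ (mem_univ j), sum_congr rfl fun k hk => by
    rw [rlooWeight, if_neg (ne_of_mem_erase hk)], ← mul_sum, rlooWeight, if_pos rfl]
  ring

theorem rloo_estimator_eq_sum_rlooWeight (n : ℕ) (x y : Fin n → ℝ) :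
    1 / (n : ℝ) * ∑ j, (x j - 1 / ((n : ℝ) - 1) * ∑ k ∈ univ.erase j, x k) * y j
      = ∑ p : Fin n × Fin n, rlooWeight n p.1 p.2 * (x p.2 * y p.1) := by
  rw [Fintype.sum_prod_type, mul_sum]
  refine sum_congr rfl fun j _ => ?_
  rw [← mul_assoc, ← sum_rlooWeight_mul, sum_mul]
  exact sum_congr rfl fun k _ => by ring

theorem sum_sum_mul_mul_ite_sub {ι κ : Type*} [Fintype ι] [Fintype κ] [DecidableEq ι]
    [DecidableEq κ] (w : ι × κ → ℝ) (hrow : ∀ j, ∑ k, w (j, k) = 0)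
    (hcol : ∀ k, ∑ j, w (j, k) = 0) (a s c t : ℝ) :
    ∑ p, ∑ q, w p * w q *
        (((if p.2 = q.2 then s else 0) + a) * ((if p.1 = q.1 then t else 0) + c) - a * c)
      = s * t * ∑ p, w p ^ 2 := by
  have hexpand : ∀ p q : ι × κ, w p * w q *
        (((if p.2 = q.2 then s else 0) + a) * ((if p.1 = q.1 then t else 0) + c) - a * c)
      = a * t * (if p.1 = q.1 then w p * w q else 0)
        + c * s * (if p.2 = q.2 then w p * w q else 0)
        + s * t * (if p = q then w p * w q else 0) := by
    rintro ⟨j, k⟩ ⟨j', k'⟩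
    by_cases hj : j = j' <;> by_cases hk : k = k' <;> simp [hj, hk] <;> ring
  have hsameRow : ∑ p : ι × κ, ∑ q : ι × κ, (if p.1 = q.1 then w p * w q else 0) = 0 := by
    refine sum_eq_zero fun p _ => ?_
    rw [Fintype.sum_prod_type, sum_congr rfl fun j _ => sum_ite_irrel _ _ _ _]
    simp [← mul_sum, hrow]
  have hsameCol : ∑ p : ι × κ, ∑ q : ι × κ, (if p.2 = q.2 then w p * w q else 0) = 0 := by
    simp [Fintype.sum_prod_type, ← mul_sum, hcol]
  simp only [hexpand, sum_add_distrib, ← mul_sum, hsameRow, hsameCol, sum_ite_eq, mem_univ,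
    if_true, sq]
  ring

section

variable {Ω : Type*} [MeasurableSpace Ω] {μ : Measure Ω}

/-- If `X * Y` were not integrable, `∫ X * Y` would be the junk value `0`, so `covar μ X Y = 0`
would force `∫ X = 0` or `∫ Y = 0`, hence `X = 0` or `Y = 0` almost everywhere. -/
theorem integrable_mul_of_covar_eq_zero {X Y : Ω → ℝ} (hX : Integrable X μ) (hY : Integrable Y μ)
    (hX0 : 0 ≤ᵐ[μ] X) (hY0 : 0 ≤ᵐ[μ] Y) (h : covar μ X Y = 0) :
    Integrable (fun ω => X ω * Y ω) μ := by
  by_contra hXY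
  rw [covar, integral_undef hXY, zero_sub, neg_eq_zero] at h
  rcases mul_eq_zero.1 h with hX' | hY'
  · have hX_ae := (integral_eq_zero_iff_of_nonneg_ae hX0 hX).1 hX'
    exact hXY <| (integrable_zero _ _ μ).congr <| by
      filter_upwards [hX_ae] with ω hω
      simp [hω]
  · have hY_ae := (integral_eq_zero_iff_of_nonneg_ae hY0 hY).1 hY'
    exact hXY <| (integrable_zero _ _ μ).congr <| by
      filter_upwards [hY_ae] with ω hω
      simp [hω]

theorem memLp_mul_of_covar_mul_self_eq_zero {X Y : Ω → ℝ} (hX : MemLp X 2 μ) (hY : MemLp Y 2 μ)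
    (h : covar μ (fun ω => X ω * X ω) (fun ω => Y ω * Y ω) = 0) :
    MemLp (fun ω => X ω * Y ω) 2 μ := by
  refine (memLp_two_iff_integrable_sq (hX.1.mul hY.1)).2 ?_
  refine (integrable_mul_of_covar_eq_zero ?_ ?_ ?_ ?_ h).congr
    (ae_of_all _ fun ω => by simp only [Pi.mul_apply]; ring)
  · simpa [sq] using hX.integrable_sq
  · simpa [sq] using hY.integrable_sq
  · exact ae_of_all _ fun ω => mul_self_nonneg (X ω)
  · exact ae_of_all _ fun ω => mul_self_nonneg (Y ω)

theorem covariance_eq_ite_of_identDistrib {ι : Type*} [DecidableEq ι] {X : ι → Ω → ℝ}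
    {Y : Ω → ℝ} (hY : MemLp Y 2 μ) (hident : ∀ i, IdentDistrib (X i) Y μ μ)
    (hindep : Pairwise fun i j => IndepFun (X i) (X j) μ) (i j : ι) :
    cov[X i, X j; μ] = if i = j then Var[Y; μ] else 0 := by
  by_cases hij : i = j
  · rw [if_pos hij, ← hij, covariance_self (hident i).aemeasurable_fst, (hident i).variance_eq]
  · rw [if_neg hij, (hindep hij).covariance_eq_zero ((hident i).memLp_iff.2 hY)
      ((hident j).memLp_iff.2 hY)]

variable [IsProbabilityMeasure μ]

theorem covariance_mul_mul_of_covar_eq_zero {A B C D : Ω → ℝ} (hA : MemLp A 2 μ)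
    (hB : MemLp B 2 μ) (hC : MemLp C 2 μ) (hD : MemLp D 2 μ)
    (hAC : MemLp (fun ω => A ω * C ω) 2 μ) (hBD : MemLp (fun ω => B ω * D ω) 2 μ)
    (hAC0 : covar μ A C = 0) (hBD0 : covar μ B D = 0)
    (hABCD : covar μ (fun ω => A ω * B ω) (fun ω => C ω * D ω) = 0) :
    cov[fun ω => A ω * C ω, fun ω => B ω * D ω; μ]
      = (cov[A, B; μ] + μ[A] * μ[B]) * (cov[C, D; μ] + μ[C] * μ[D])
        - μ[A] * μ[B] * (μ[C] * μ[D]) := by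
  have hswap : ∫ ω, A ω * C ω * (B ω * D ω) ∂μ = ∫ ω, A ω * B ω * (C ω * D ω) ∂μ :=
    integral_congr_ae (ae_of_all _ fun ω => by ring)
  simp only [covar, sub_eq_zero] at hAC0 hBD0 hABCD
  rw [covariance_eq_sub hAC hBD, covariance_eq_sub hA hB, covariance_eq_sub hC hD]
  simp only [Pi.mul_apply, hswap, hABCD, hAC0, hBD0]
  ring

end

/-- **RLOO gradient variance (continuous reward).** -/
theorem rloo_variance_continuous
    {Ω : Type*} [MeasurableSpace Ω] (μ : Measure Ω) [IsProbabilityMeasure μ]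
    (n : ℕ) (hn : 2 ≤ n)
    (R Z : Ω → ℝ) (Rv Zv : Fin n → Ω → ℝ)
    (hR2 : MemLp R 2 μ) (hZ2 : MemLp Z 2 μ)
    (hident : ∀ i, IdentDistrib (fun ω => (Rv i ω, Zv i ω)) (fun ω => (R ω, Z ω)) μ μ)
    (hindep : iIndepFun (fun i ω => (Rv i ω, Zv i ω)) μ)
    (hcov1 : ∀ j k, covar μ (Rv k) (Zv j) = 0)
    (hcov2 : ∀ j j' k k', covar μ (fun ω => Rv k ω * Rv k' ω)
      (fun ω => Zv j ω * Zv j' ω) = 0) :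
    variance (fun ω =>
        (1 / (n : ℝ)) * ∑ j,
          (Rv j ω - (1 / ((n : ℝ) - 1)) * ∑ k ∈ Finset.univ.erase j, Rv k ω) * Zv j ω) μ
      = variance Z μ / ((n : ℝ) - 1) * variance R μ := by
  have hRv : ∀ i, IdentDistrib (Rv i) R μ μ := fun i => (hident i).comp measurable_fst
  have hZv : ∀ i, IdentDistrib (Zv i) Z μ μ := fun i => (hident i).comp measurable_snd
  have hRv2 : ∀ i, MemLp (Rv i) 2 μ := fun i => (hRv i).memLp_iff.2 hR2
  have hZv2 : ∀ i, MemLp (Zv i) 2 μ := fun i => (hZv i).memLp_iff.2 hZ2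
  have hRZ2 : ∀ p : Fin n × Fin n, MemLp (fun ω => Rv p.2 ω * Zv p.1 ω) 2 μ := fun p =>
    memLp_mul_of_covar_mul_self_eq_zero (hRv2 _) (hZv2 _) (hcov2 _ _ _ _)
  have hcovR := covariance_eq_ite_of_identDistrib hR2 hRv
    fun i j hij => (hindep.indepFun hij).comp measurable_fst measurable_fst
  have hcovZ := covariance_eq_ite_of_identDistrib hZ2 hZv
    fun i j hij => (hindep.indepFun hij).comp measurable_snd measurable_snd
  simp_rw [rloo_estimator_eq_sum_rlooWeight]
  rw [variance_fun_sum fun p => (hRZ2 p).const_mul _]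
  simp_rw [covariance_const_mul_left, covariance_const_mul_right,
    covariance_mul_mul_of_covar_eq_zero (hRv2 _) (hRv2 _) (hZv2 _) (hZv2 _) (hRZ2 _) (hRZ2 _)
      (hcov1 _ _) (hcov1 _ _) (hcov2 _ _ _ _), hcovR, hcovZ, fun i => (hRv i).integral_eq,
    fun i => (hZv i).integral_eq]
  have key := sum_sum_mul_mul_ite_sub (fun p : Fin n × Fin n => rlooWeight n p.1 p.2)
    (sum_rlooWeight hn) (fun k => by simpa only [rlooWeight_comm] using sum_rlooWeight hn k)
    (μ[R] * μ[R]) Var[R; μ] (μ[Z] * μ[Z]) Var[Z; μ]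
  simp only [← mul_assoc] at key ⊢
  rw [key, sum_rlooWeight_sq hn]
  ring
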